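/- Let f : ℝ^d → ℝ be differentiable, and suppose that for every x ∈ ℝ^d there is a random vector g(x) in ℝ^d with E[g(x)] = ∇f(x), with g(x) and ‖g(x)‖² integrable, such that for every coordinate v the probability that the v-th coordinate of g(x) is nonzero is at most Δ, where 0 < Δ ≤ 1. Suppose M ≥ 0 and σ² ≥ 0 satisfy E‖g(x) − ∇f(x)‖² ≤ M‖∇f(x)‖² + σ² for all x, and suppose the gradient norm is unbounded: sup_{x ∈ ℝ^d} ‖∇f(x)‖ = ∞. Then M ≥ (1 − Δ)/Δ. -/

import Mathlib

/-!
Coordinatewise Cauchy–Schwarz on the event `{g_v ≠ 0}` gives `(∇_v f)² ≤ Δ · E[g_v²]`; summing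
over `v` and using `E‖g‖² = E‖g - ∇f‖² + ‖∇f‖²` together with the noise bound yields
`(1 - Δ (M + 1)) ‖∇f(x)‖² ≤ Δ σ²` for every `x`. Since `‖∇f‖` is unbounded, the coefficient
`1 - Δ (M + 1)` cannot be positive.
-/

open MeasureTheory

section

variable {α : Type*} [MeasurableSpace α] {μ : Measure α}

theorem sq_integral_le_measureReal_univ_mul_integral_sq [IsFiniteMeasure μ] {φ : α → ℝ}
    (hφ : Integrable φ μ) (hφ2 : Integrable (fun ω => φ ω ^ 2) μ) :
    (∫ ω, φ ω ∂μ) ^ 2 ≤ μ.real Set.univ * ∫ ω, φ ω ^ 2 ∂μ := by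
  have hquad : ∀ t : ℝ, 0 ≤ μ.real Set.univ * (t * t) + (-2 * ∫ ω, φ ω ∂μ) * t
      + ∫ ω, φ ω ^ 2 ∂μ := fun t => by
    have hlin : Integrable (fun ω => φ ω ^ 2 - 2 * t * φ ω) μ := hφ2.sub (hφ.const_mul _)
    have hexp : ∫ ω, (φ ω - t) ^ 2 ∂μ
        = ∫ ω, φ ω ^ 2 ∂μ - 2 * t * ∫ ω, φ ω ∂μ + t ^ 2 * μ.real Set.univ := calc
      _ = ∫ ω, (φ ω ^ 2 - 2 * t * φ ω + t ^ 2) ∂μ := by congr with ω; ring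
      _ = _ := by
        rw [integral_add hlin (integrable_const _), integral_sub hφ2 (hφ.const_mul _),
          integral_const_mul, integral_const, smul_eq_mul]
        ring
    have hnonneg : 0 ≤ ∫ ω, (φ ω - t) ^ 2 ∂μ := integral_nonneg fun ω => sq_nonneg _
    linarith
  have hdiscr := discrim_le_zero hquad
  rw [discrim] at hdiscr
  linarith

theorem sq_integral_le_measureReal_support_mul_integral_sq [IsFiniteMeasure μ] {φ : α → ℝ}
    (hφ : Integrable φ μ) (hφ2 : Integrable (fun ω => φ ω ^ 2) μ) :
    (∫ ω, φ ω ∂μ) ^ 2 ≤ μ.real (Function.support φ) * ∫ ω, φ ω ^ 2 ∂μ := by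
  have hvanish : ∀ {ψ : α → ℝ}, (∀ ω, φ ω = 0 → ψ ω = 0) →
      ∫ ω in Function.support φ, ψ ω ∂μ = ∫ ω, ψ ω ∂μ := fun hψ =>
    setIntegral_eq_integral_of_forall_compl_eq_zero fun ω hω =>
      hψ ω (Function.notMem_support.mp hω)
  have hrestrict := sq_integral_le_measureReal_univ_mul_integral_sq
    (μ := μ.restrict (Function.support φ)) hφ.restrict hφ2.restrict
  rwa [measureReal_restrict_apply_univ, hvanish fun _ h => h,
    hvanish fun ω h => by simp [h]] at hrestrict

theorem integral_norm_sub_integral_sq {E : Type*} [NormedAddCommGroup E] [InnerProductSpace ℝ E]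
    [CompleteSpace E] [IsProbabilityMeasure μ] {X : α → E}
    (hX : Integrable X μ) (hX2 : Integrable (fun ω => ‖X ω‖ ^ 2) μ) :
    ∫ ω, ‖X ω - ∫ ω, X ω ∂μ‖ ^ 2 ∂μ = ∫ ω, ‖X ω‖ ^ 2 ∂μ - ‖∫ ω, X ω ∂μ‖ ^ 2 := by
  set m := ∫ ω, X ω ∂μ
  have hlin : Integrable (fun ω => ‖X ω‖ ^ 2 - 2 * inner ℝ m (X ω)) μ :=
    hX2.sub ((hX.const_inner m).const_mul 2)
  simp_rw [norm_sub_sq_real, real_inner_comm m]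
  rw [integral_add hlin (integrable_const _), integral_sub hX2 ((hX.const_inner m).const_mul 2),
    integral_const_mul, integral_inner hX, real_inner_self_eq_norm_sq, integral_const,
    probReal_univ, one_smul]
  ring

theorem sq_norm_integral_le_mul_integral_sq_norm [IsFiniteMeasure μ] {ι : Type*} [Fintype ι]
    {X : α → EuclideanSpace ℝ ι} (hX : Integrable X μ)
    (hX2 : Integrable (fun ω => ‖X ω‖ ^ 2) μ) {Δ : ℝ}
    (hsparse : ∀ i, μ.real {ω | X ω i ≠ 0} ≤ Δ) :
    ‖∫ ω, X ω ∂μ‖ ^ 2 ≤ Δ * ∫ ω, ‖X ω‖ ^ 2 ∂μ := by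
  have hL2 : MemLp X 2 μ := (memLp_two_iff_integrable_sq_norm hX.1).mpr hX2
  have hcoord : ∀ i, Integrable (fun ω => X ω i) μ := fun i =>
    (EuclideanSpace.proj (𝕜 := ℝ) i).integrable_comp hX
  have hcoord2 : ∀ i, Integrable (fun ω => X ω i ^ 2) μ := fun i =>
    (hL2.continuousLinearMap_comp (EuclideanSpace.proj (𝕜 := ℝ) i)).integrable_sq
  have hmean : ∀ i, (∫ ω, X ω ∂μ) i = ∫ ω, X ω i ∂μ := fun i =>
    ((EuclideanSpace.proj (𝕜 := ℝ) i).integral_comp_comm hX).symm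
  simp_rw [EuclideanSpace.real_norm_sq_eq]
  rw [integral_finsetSum _ fun i _ => hcoord2 i, Finset.mul_sum]
  refine Finset.sum_le_sum fun i _ => ?_
  rw [hmean]
  refine (sq_integral_le_measureReal_support_mul_integral_sq (hcoord i) (hcoord2 i)).trans ?_
  exact mul_le_mul_of_nonneg_right (hsparse i) (integral_nonneg fun ω => sq_nonneg _)

end

theorem nonpos_of_forall_mul_sq_le {β : Type*} {u : β → ℝ} {a b : ℝ}
    (hu : ∀ c, ∃ x, c < u x) (h : ∀ x, a * u x ^ 2 ≤ b) : a ≤ 0 := by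
  by_contra! ha
  obtain ⟨x, hx⟩ := hu (max (b / a) 1)
  have hbx : b < a * u x := by
    rw [← div_lt_iff₀' ha]; exact (le_max_left _ _).trans_lt hx
  have hux : 1 < u x := (le_max_right _ _).trans_lt hx
  have hpos : 0 < a * u x := mul_pos ha (zero_lt_one.trans hux)
  nlinarith [h x]

theorem noise_param_lower_bound_of_sparse_general
    {d : ℕ} (f : EuclideanSpace ℝ (Fin d) → ℝ)
    (Ω : EuclideanSpace ℝ (Fin d) → Type*) [∀ x, MeasurableSpace (Ω x)]
    (P : ∀ x, Measure (Ω x)) [∀ x, IsProbabilityMeasure (P x)]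
    (g : ∀ x, Ω x → EuclideanSpace ℝ (Fin d))
    (hgint : ∀ x, Integrable (g x) (P x))
    (hg2int : ∀ x, Integrable (fun ω => ‖g x ω‖ ^ 2) (P x))
    (hunbiased : ∀ x, ∫ ω, g x ω ∂(P x) = gradient f x)
    (Δ : ℝ) (hΔ0 : 0 < Δ)
    (hsparse : ∀ x (v : Fin d), P x {ω | g x ω v ≠ 0} ≤ ENNReal.ofReal Δ)
    (M σ2 : ℝ)
    (hnoise : ∀ x, ∫ ω, ‖g x ω - gradient f x‖ ^ 2 ∂(P x) ≤ M * ‖gradient f x‖ ^ 2 + σ2)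
    (hunbdd : ∀ c : ℝ, ∃ x, c < ‖gradient f x‖) :
    (1 - Δ) / Δ ≤ M := by
  have hgrad_bound : ∀ x, (1 - Δ * (M + 1)) * ‖gradient f x‖ ^ 2 ≤ Δ * σ2 := fun x => by
    have hsecond := sq_norm_integral_le_mul_integral_sq_norm (hgint x) (hg2int x)
      fun v => ENNReal.toReal_le_of_le_ofReal hΔ0.le (hsparse x v)
    have hsplit := integral_norm_sub_integral_sq (hgint x) (hg2int x)
    rw [hunbiased x] at hsecond hsplit
    nlinarith [mul_le_mul_of_nonneg_left (hnoise x) hΔ0.le]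
  have hcoeff := nonpos_of_forall_mul_sq_le hunbdd hgrad_bound
  rw [div_le_iff₀ hΔ0]
  linarith

/-- If a stochastic gradient oracle for `f` is `Δ`-sparse, satisfies the noise property
with parameters `(M, σ²)`, and the gradient norm of `f` is unbounded, then
`M ≥ (1 - Δ)/Δ`. -/
theorem noise_param_lower_bound_of_sparse
    {d : ℕ} (f : EuclideanSpace ℝ (Fin d) → ℝ) (hf : Differentiable ℝ f)
    (Ω : EuclideanSpace ℝ (Fin d) → Type*) [∀ x, MeasurableSpace (Ω x)]
    (P : ∀ x, Measure (Ω x)) [∀ x, IsProbabilityMeasure (P x)]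
    (g : ∀ x, Ω x → EuclideanSpace ℝ (Fin d))
    (hgint : ∀ x, Integrable (g x) (P x))
    (hg2int : ∀ x, Integrable (fun ω => ‖g x ω‖ ^ 2) (P x))
    (hunbiased : ∀ x, ∫ ω, g x ω ∂(P x) = gradient f x)
    (Δ : ℝ) (hΔ0 : 0 < Δ) (hΔ1 : Δ ≤ 1)
    (hsparse : ∀ x (v : Fin d), P x {ω | g x ω v ≠ 0} ≤ ENNReal.ofReal Δ)
    (M σ2 : ℝ) (hM : 0 ≤ M) (hσ2 : 0 ≤ σ2)
    (hnoise : ∀ x, ∫ ω, ‖g x ω - gradient f x‖ ^ 2 ∂(P x) ≤ M * ‖gradient f x‖ ^ 2 + σ2)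
    (hunbdd : ∀ c : ℝ, ∃ x, c < ‖gradient f x‖) :
    (1 - Δ) / Δ ≤ M :=
  noise_param_lower_bound_of_sparse_general f Ω P g hgint hg2int hunbiased Δ hΔ0 hsparse M σ2 hnoise
    hunbdd
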